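/- Let m, k, l be natural numbers with k ≤ 2m, k−m ≤ l and l ≤ min(m,k), and set n := 2m, M := m−l, N := m−k+l. Then the expectation of the explicit Racah-presentation pmf satisfies the finite identity ∑_{x=0}^{m} x·p(x | 2m, m, k, l) = m + 1/2 − (1/2)·∑_{r=0}^{min(M,N)} (−1)^r · 4^{m−r} · C(N, r) · C(M+N−r, N) / C(2(m−r), m−r). -/

import Mathlib

open Finset

/-- Rising factorial `(a)_r = a(a+1)⋯(a+r−1)` in `ℚ`. -/
noncomputable def risingFac (a : ℚ) (r : ℕ) : ℚ := ∏ j ∈ Finset.range r, (a + j)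

/-- The terminating `₄F₃`-hypergeometric (Racah polynomial) sum
`∑_{r=0}^{min(x,M,N)} ((−x)_r (x−n−1)_r (−M)_r (−N)_r)/(r! (−m)_r (m−n)_r (−M−N)_r)`. -/
noncomputable def racahSum (n m M N x : ℕ) : ℚ :=
  ∑ r ∈ Finset.range (min x (min M N) + 1),
    risingFac (-(x : ℚ)) r * risingFac ((x : ℚ) - n - 1) r * risingFac (-(M : ℚ)) r *
        risingFac (-(N : ℚ)) r /
      ((r.factorial : ℚ) * risingFac (-(m : ℚ)) r * risingFac ((m : ℚ) - n) r *
        risingFac (-((M : ℚ) + N)) r)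

/-- The explicit Racah-presentation probability mass function `p(x | n,m,k,l)`,
with `M := m−l` and `N := n−m−k+l` (realized as `n+l-m-k` in `ℕ`). -/
noncomputable def racahPMF (n m k l x : ℕ) : ℚ :=
  ((n - k).choose (m - l) : ℚ) * ((n.choose x : ℚ) / (n.choose m : ℚ)) *
    (((n : ℚ) - 2 * x + 1) / ((n : ℚ) - x + 1)) *
    racahSum n m (m - l) (n + l - m - k) x

/-!
Expanding the Racah sum with `(-a)_r = (-1)^r a↓r` (`↓` the descending factorial) writes
`x p(x | 2m,m,k,l)` as a combination over `r` of `x (2m+1-2x) C(2m+1,x) x↓r (2m+1-x)↓r`,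
and `C(2m+1,x) x↓r (2m+1-x)↓r = (2m+1)↓(2r) C(2h+1, x-r)` with `h = m - r`. The sum over `x`
then telescopes against `(y² + (r - 1/2) y) C(2h+1, y)` and, with `∑_{y ≤ h} C(2h+1, y) = 4^h`,
equals `(2h+1) ((m + 1/2) C(2h,h) - 4^h / 2)`. After this the weight of the `r`-th term
collapses to `(-1)^r C(N,r) C(M+N-r, N)`; these weights sum to `1`, being the `N`-th forward
difference of `x ↦ C(x, N)` at `M`.
-/

open Nat

theorem Nat.choose_mul_descFactorial_mul_descFactorial {n x r : ℕ} (hrx : r ≤ x)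
    (hxn : x + r ≤ n) :
    n.choose x * x.descFactorial r * (n - x).descFactorial r =
      n.descFactorial (2 * r) * (n - 2 * r).choose (x - r) := by
  refine Nat.eq_of_mul_eq_mul_right
    (mul_pos (factorial_pos (x - r)) (factorial_pos (n - x - r))) ?_
  calc n.choose x * x.descFactorial r * (n - x).descFactorial r * ((x - r)! * (n - x - r)!)
      = n.choose x * ((x - r)! * x.descFactorial r) *
          ((n - x - r)! * (n - x).descFactorial r) := by
        ring
    _ = n ! := by
        rw [factorial_mul_descFactorial hrx, factorial_mul_descFactorial (by omega),
          choose_mul_factorial_mul_factorial (by omega)]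
    _ = n.descFactorial (2 * r) *
          ((n - 2 * r).choose (x - r) * (x - r)! * (n - 2 * r - (x - r))!) := by
        rw [choose_mul_factorial_mul_factorial (by omega), mul_comm,
          factorial_mul_descFactorial (by omega)]
    _ = _ := by rw [show n - 2 * r - (x - r) = n - x - r by omega]; ring

theorem Nat.descFactorial_two_mul_mul_centralChoose {m r : ℕ} (hrm : r ≤ m) :
    (2 * m + 1).descFactorial (2 * r) * ((2 * (m - r) + 1) * (2 * (m - r)).choose (m - r)) =
      (2 * m + 1) * (2 * m).choose m * m.descFactorial r ^ 2 := by
  refine Nat.eq_of_mul_eq_mul_right (pow_pos (factorial_pos (m - r)) 2) ?_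
  calc (2 * m + 1).descFactorial (2 * r) * ((2 * (m - r) + 1) * (2 * (m - r)).choose (m - r))
          * (m - r)! ^ 2
      = (2 * m + 1).descFactorial (2 * r) * ((2 * (m - r) + 1) *
          ((2 * (m - r)).choose (m - r) * (m - r)! * (2 * (m - r) - (m - r))!)) := by
        rw [show 2 * (m - r) - (m - r) = m - r by omega]; ring
    _ = (2 * m + 1)! := by
        rw [choose_mul_factorial_mul_factorial (by omega), ← factorial_succ,
          ← factorial_mul_descFactorial (show 2 * r ≤ 2 * m + 1 by omega),
          show 2 * m + 1 - 2 * r = (2 * (m - r)).succ by omega]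
        ring
    _ = (2 * m + 1) * ((2 * m).choose m * m ! * (2 * m - m)!) := by
        rw [choose_mul_factorial_mul_factorial (by omega), factorial_succ]
    _ = (2 * m + 1) * (2 * m).choose m * ((m - r)! * m.descFactorial r) ^ 2 := by
        rw [factorial_mul_descFactorial hrm, show 2 * m - m = m by omega]; ring
    _ = _ := by ring

theorem Nat.choose_add_mul_descFactorial_mul_descFactorial {M N r : ℕ} (hrM : r ≤ M) :
    (M + N).choose M * M.descFactorial r * N.descFactorial r =
      r ! * (M + N).descFactorial r * (N.choose r * (M + N - r).choose N) := by
  have h := Nat.choose_mul (n := M + N) hrM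
  rw [choose_symm_of_eq_add (show M + N - r = M - r + N by omega)] at h
  simp only [descFactorial_eq_factorial_mul_choose]
  linear_combination (r ! * r ! * N.choose r) * h

theorem sum_range_neg_one_pow_mul_choose_mul_choose_add_sub (M N : ℕ) :
    ∑ r ∈ range (N + 1), (-1 : ℤ) ^ r * N.choose r * (M + N - r).choose N = 1 := by
  have h := congrFun (fwdDiff_iter_choose 0 N) M
  rw [fwdDiff_iter_eq_sum_shift] at h
  simp only [add_zero, Nat.choose_zero_right, Nat.cast_one, smul_eq_mul, mul_one] at h
  refine Eq.trans ?_ h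
  rw [← sum_range_reflect]
  refine sum_congr rfl fun r hr => ?_
  rw [mem_range] at hr
  rw [show N + 1 - 1 - r = N - r by omega, Nat.choose_symm (by omega),
    show M + N - (N - r) = M + r by omega]

theorem risingFac_neg_natCast (a r : ℕ) : risingFac (-a) r = (-1) ^ r * a.descFactorial r := by
  induction r with
  | zero => simp [risingFac]
  | succ r ih =>
    rw [risingFac, prod_range_succ, ← risingFac, ih, descFactorial_succ]
    rcases le_or_gt r a with h | h
    · push_cast [h]; ring
    · simp [descFactorial_of_lt h]

theorem sum_range_add_mul_sub_two_mul_add_half_mul_choose (n r j : ℕ) :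
    ∑ y ∈ range j, (((y : ℚ) + r) * (n - 2 * y) + n / 2) * n.choose y =
      ((j : ℚ) ^ 2 + (r - 1 / 2) * j) * n.choose j := by
  induction j with
  | zero => simp
  | succ j ih =>
    have pascal : (n.choose (j + 1) : ℚ) * (j + 1) = n.choose j * (n - j) := by
      rcases le_or_gt j n with h | h
      · have := choose_succ_right_eq n j
        rw [← Nat.cast_sub h]
        exact_mod_cast this
      · simp [choose_eq_zero_of_lt h, choose_eq_zero_of_lt (h.trans (lt_succ_self j))]
    rw [sum_range_succ, ih]
    push_cast
    linear_combination (-(j : ℚ) - r - 1 / 2) * pascal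

theorem sum_range_add_mul_sub_two_mul_choose (h r : ℕ) :
    ∑ y ∈ range (h + 1), ((y : ℚ) + r) * (2 * h + 1 - 2 * y) * (2 * h + 1).choose y =
      (2 * h + 1) * ((h + r + 1 / 2) * (2 * h).choose h - 4 ^ h / 2) := by
  have tel := sum_range_add_mul_sub_two_mul_add_half_mul_choose (2 * h + 1) r (h + 1)
  have halfway : ∑ y ∈ range (h + 1), ((2 * h + 1).choose y : ℚ) = 4 ^ h := by
    exact_mod_cast sum_range_choose_halfway h
  have central :
      ((2 * h + 1) * (2 * h).choose h : ℚ) = (2 * h + 1).choose (h + 1) * (h + 1) := by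
    exact_mod_cast add_one_mul_choose_eq (2 * h) h
  simp only [add_mul _ _ ((_ : ℕ) : ℚ)] at tel
  rw [sum_add_distrib, ← mul_sum, halfway] at tel
  push_cast at tel
  linear_combination tel - (h + r + 1 / 2) * central

theorem sum_range_mul_sub_two_mul_choose_mul_descFactorial {m r : ℕ} (hrm : r ≤ m) :
    ∑ x ∈ range (m + 1), (x : ℚ) * (2 * m + 1 - 2 * x) *
        ((2 * m + 1).choose x * x.descFactorial r * (2 * m + 1 - x).descFactorial r : ℕ) =
      (2 * m + 1).descFactorial (2 * r) *
        ((2 * (m - r) + 1) * ((m + 1 / 2) * (2 * (m - r)).choose (m - r) - 4 ^ (m - r) / 2)) := by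
  obtain ⟨h, rfl⟩ := Nat.exists_eq_add_of_le' hrm
  have shifted : ∀ y ∈ range (h + 1),
      ((r + y : ℕ) : ℚ) * (2 * (h + r : ℕ) + 1 - 2 * (r + y : ℕ)) *
        ((2 * (h + r) + 1).choose (r + y) * (r + y).descFactorial r *
          (2 * (h + r) + 1 - (r + y)).descFactorial r : ℕ) =
      (2 * (h + r) + 1).descFactorial (2 * r) *
        (((y : ℚ) + r) * (2 * h + 1 - 2 * y) * (2 * h + 1).choose y) := by
    intro y hy
    rw [choose_mul_descFactorial_mul_descFactorial (by omega) (by grind),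
      show 2 * (h + r) + 1 - 2 * r = 2 * h + 1 by omega, Nat.add_sub_cancel_left]
    push_cast
    ring
  rw [show h + r + 1 = r + (h + 1) by ring, sum_range_add,
    sum_eq_zero fun x hx => by simp [descFactorial_of_lt (mem_range.1 hx)], zero_add,
    sum_congr rfl shifted, ← mul_sum, sum_range_add_mul_sub_two_mul_choose, Nat.add_sub_cancel]
  push_cast
  ring

/-- The `r`-th term of `racahSum (2 * m) m M N x`, with its prefactor from `racahPMF`, once the
factors depending on `x` are taken out. -/
noncomputable def racahCoeff (m M N r : ℕ) : ℚ :=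
  (-1) ^ r * (M + N).choose M * M.descFactorial r * N.descFactorial r /
    ((2 * m).choose m * r ! * m.descFactorial r ^ 2 * (M + N).descFactorial r)

theorem racahPMF_two_mul_eq_sum {m k l x : ℕ} (hkl : k ≤ m + l) (hlm : l ≤ m)
    (hx : x ≤ 2 * m) :
    racahPMF (2 * m) m k l x =
      ∑ r ∈ range (min (m - l) (m + l - k) + 1),
        racahCoeff m (m - l) (m + l - k) r * ((2 * m + 1 - 2 * x) / (2 * m + 1)) *
          ((2 * m + 1).choose x * x.descFactorial r * (2 * m + 1 - x).descFactorial r : ℕ) := by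
  unfold racahPMF racahSum
  rw [show 2 * m + l - m - k = m + l - k by omega]
  set M := m - l
  set N := m + l - k
  have hsum : 2 * m - k = M + N := by omega
  have hx' : ((x : ℚ) - (2 * m : ℕ) - 1) = -(2 * m + 1 - x : ℕ) := by
    push_cast [show x ≤ 2 * m + 1 by omega]; ring
  have hm' : ((m : ℚ) - (2 * m : ℕ)) = -m := by push_cast; ring
  have hMN' : -((M : ℚ) + N) = -(M + N : ℕ) := by push_cast; ring
  have pascal :
      ((2 * m).choose x * (2 * m + 1) : ℚ) = (2 * m + 1).choose x * (2 * m + 1 - x : ℕ) := by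
    exact_mod_cast choose_mul_succ_eq (2 * m) x
  rw [hsum, mul_sum, hx', hm', hMN']
  rw [sum_subset (range_subset_range.2 (show min x (min M N) + 1 ≤ min M N + 1 by omega))]
  · refine sum_congr rfl fun r hr => ?_
    have hrM : r ≤ M := by grind
    simp only [risingFac_neg_natCast, racahCoeff]
    have hm : (m.descFactorial r : ℚ) ≠ 0 :=
      Nat.cast_ne_zero.2 (descFactorial_eq_zero_iff_lt.not.2 (by omega))
    have hMN : ((M + N).descFactorial r : ℚ) ≠ 0 :=
      Nat.cast_ne_zero.2 (descFactorial_eq_zero_iff_lt.not.2 (by omega))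
    have hc : ((2 * m).choose m : ℚ) ≠ 0 :=
      Nat.cast_ne_zero.2 (choose_pos (by omega)).ne'
    have hden : ((2 * m : ℕ) : ℚ) - x + 1 = (2 * m + 1 - x : ℕ) := by
      push_cast [show x ≤ 2 * m + 1 by omega]; ring
    have hx0 : ((2 * m + 1 - x : ℕ) : ℚ) ≠ 0 := Nat.cast_ne_zero.2 (by omega)
    rw [hden]
    field_simp
    push_cast
    linear_combination ((M + N).choose M * (2 * m - 2 * x + 1) * x.descFactorial r *
      (2 * m + 1 - x).descFactorial r * M.descFactorial r * N.descFactorial r : ℚ) * pascal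
  · intro r _ hr
    have : x < r := by grind
    simp [risingFac_neg_natCast, descFactorial_of_lt this]

theorem racahCoeff_mul_eq {m M N r : ℕ} (hrM : r ≤ M) (hrm : r ≤ m) :
    racahCoeff m M N r * (2 * m + 1).descFactorial (2 * r) * (2 * (m - r) + 1 : ℕ) *
        (2 * (m - r)).choose (m - r) =
      (2 * m + 1) * ((-1) ^ r * N.choose r * (M + N - r).choose N) := by
  have central : ((2 * m + 1).descFactorial (2 * r) * ((2 * (m - r) + 1 : ℕ) *
      (2 * (m - r)).choose (m - r)) : ℚ) =
        (2 * m + 1) * (2 * m).choose m * m.descFactorial r ^ 2 := by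
    exact_mod_cast descFactorial_two_mul_mul_centralChoose hrm
  have split : ((M + N).choose M * M.descFactorial r * N.descFactorial r : ℚ) =
      r ! * (M + N).descFactorial r * (N.choose r * (M + N - r).choose N) := by
    exact_mod_cast choose_add_mul_descFactorial_mul_descFactorial (N := N) hrM
  have hm : (m.descFactorial r : ℚ) ≠ 0 :=
    Nat.cast_ne_zero.2 (descFactorial_eq_zero_iff_lt.not.2 (by omega))
  have hMN : ((M + N).descFactorial r : ℚ) ≠ 0 :=
    Nat.cast_ne_zero.2 (descFactorial_eq_zero_iff_lt.not.2 (by omega))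
  have hc : ((2 * m).choose m : ℚ) ≠ 0 :=
    Nat.cast_ne_zero.2 (choose_pos (by omega)).ne'
  unfold racahCoeff
  field_simp
  linear_combination ((2 * m + 1).descFactorial (2 * r) * ((2 * (m - r) + 1 : ℕ) *
      (2 * (m - r)).choose (m - r)) : ℚ) * split +
    (r ! * (M + N).descFactorial r * (N.choose r * (M + N - r).choose N) : ℚ) * central

theorem sum_range_mul_racahCoeff_mul {m M N r : ℕ} (hrM : r ≤ M) (hrm : r ≤ m) :
    ∑ x ∈ range (m + 1), (x : ℚ) * (racahCoeff m M N r * ((2 * m + 1 - 2 * x) / (2 * m + 1)) *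
        ((2 * m + 1).choose x * x.descFactorial r * (2 * m + 1 - x).descFactorial r : ℕ)) =
      (-1) ^ r * N.choose r * (M + N - r).choose N * (m + 1 / 2) -
        1 / 2 * ((-1) ^ r * 4 ^ (m - r) * N.choose r * (M + N - r).choose N /
          (2 * (m - r)).choose (m - r)) := by
  have hc : ((2 * (m - r)).choose (m - r) : ℚ) ≠ 0 :=
    Nat.cast_ne_zero.2 (choose_pos (by omega)).ne'
  calc _ = racahCoeff m M N r / (2 * m + 1) *
        ∑ x ∈ range (m + 1), (x : ℚ) * (2 * m + 1 - 2 * x) *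
          ((2 * m + 1).choose x * x.descFactorial r * (2 * m + 1 - x).descFactorial r : ℕ) := by
        rw [mul_sum]
        exact sum_congr rfl fun x _ => by ring
    _ = racahCoeff m M N r * (2 * m + 1).descFactorial (2 * r) * (2 * (m - r) + 1 : ℕ) *
        (2 * (m - r)).choose (m - r) / (2 * m + 1) *
          (m + 1 / 2 - 4 ^ (m - r) / (2 * (2 * (m - r)).choose (m - r))) := by
        rw [sum_range_mul_sub_two_mul_choose_mul_descFactorial hrm]
        push_cast [hrm]
        field_simp
    _ = _ := by
        rw [racahCoeff_mul_eq hrM hrm]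
        field_simp

theorem expectation_n_eq_two_m_general (m k l : ℕ) (hkl : k ≤ m + l)
    (hlm : l ≤ m) :
    ∑ x ∈ Finset.range (m + 1), (x : ℚ) * racahPMF (2 * m) m k l x
      = (m : ℚ) + 1 / 2 - (1 / 2) *
          ∑ r ∈ Finset.range (min (m - l) (m + l - k) + 1),
            (-1 : ℚ) ^ r * 4 ^ (m - r) * ((m + l - k).choose r : ℚ) *
                ((m - l + (m + l - k) - r).choose (m + l - k) : ℚ) /
              ((2 * (m - r)).choose (m - r) : ℚ) := by
  set M := m - l
  set N := m + l - k
  have total :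
      ∑ r ∈ range (min M N + 1), ((-1) ^ r * N.choose r * (M + N - r).choose N : ℚ) = 1 := by
    rw [sum_subset (range_subset_range.2 (show min M N + 1 ≤ N + 1 by omega))]
    · exact_mod_cast sum_range_neg_one_pow_mul_choose_mul_choose_add_sub M N
    · intro r _ hr
      simp [choose_eq_zero_of_lt (show M + N - r < N by grind)]
  calc ∑ x ∈ range (m + 1), (x : ℚ) * racahPMF (2 * m) m k l x
      = ∑ r ∈ range (min M N + 1), ∑ x ∈ range (m + 1), (x : ℚ) * (racahCoeff m M N r *
          ((2 * m + 1 - 2 * x) / (2 * m + 1)) *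
          ((2 * m + 1).choose x * x.descFactorial r * (2 * m + 1 - x).descFactorial r : ℕ)) := by
        rw [sum_comm]
        exact sum_congr rfl fun x hx => by
          rw [racahPMF_two_mul_eq_sum hkl hlm (by grind), mul_sum]
    _ = _ := by
        rw [sum_congr rfl fun r hr => sum_range_mul_racahCoeff_mul (by grind) (by grind),
          sum_sub_distrib, ← sum_mul, total, ← mul_sum, one_mul]

/-- **Expectation in the case `n = 2m`** as a single alternating sum: with
`M := m−l`, `N := m−k+l`,
`∑_{x=0}^m x p(x | 2m,m,k,l)
  = m + 1/2 − (1/2) ∑_{r=0}^{min(M,N)} (−1)^r 4^{m−r} C(N,r) C(M+N−r,N) / C(2(m−r),m−r)`. -/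
theorem expectation_n_eq_two_m (m k l : ℕ) (hk : k ≤ 2 * m) (hkl : k ≤ m + l)
    (hlm : l ≤ m) (hlk : l ≤ k) :
    ∑ x ∈ Finset.range (m + 1), (x : ℚ) * racahPMF (2 * m) m k l x
      = (m : ℚ) + 1 / 2 - (1 / 2) *
          ∑ r ∈ Finset.range (min (m - l) (m + l - k) + 1),
            (-1 : ℚ) ^ r * 4 ^ (m - r) * ((m + l - k).choose r : ℚ) *
                ((m - l + (m + l - k) - r).choose (m + l - k) : ℚ) /
              ((2 * (m - r)).choose (m - r) : ℚ) :=
  expectation_n_eq_two_m_general m k l hkl hlm
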